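/- arXiv:1704.06651 — 4 statements merged into one kernel-verified Lean document; each statement's English description precedes it below -/
import Mathlib

section
/- For each m, every positive integer K and every R×R complex matrix B, the spectral norm of Ψ_K^{(m)}(B) satisfies ‖Ψ_K^{(m)}(B)‖ ≤ sup_{ν∈[0,1]} |S_m(ν) a_R(ν)^H B a_R(ν)| ≤ (sup_{ν∈[0,1]} |S_m(ν)|)·‖B‖. -/
open MeasureTheory ProbabilityTheory Matrix Complex Filter
open scoped ComplexOrder

noncomputable section

/-- The closed positive real half-line `[0,∞)` viewed as a subset of `ℂ`. -/
def RPlus : Set ℂ := (fun x : ℝ => (x : ℂ)) '' Set.Ici 0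

/-- `δ_z`, the distance from `z` to `[0,∞)`. -/
def deltaZ (z : ℂ) : ℝ := Metric.infDist z RPlus

/-- The vector `d_R(ν) = (1, e^{2πiν}, …, e^{2πi(R−1)ν})ᵀ`. -/
def dvec (R : ℕ) (ν : ℝ) : Fin R → ℂ :=
  fun r => Complex.exp (2 * Real.pi * Complex.I * ν * (r : ℕ))

/-- The normalized vector `a_R(ν) = d_R(ν)/√R`. -/
def avec (R : ℕ) (ν : ℝ) : Fin R → ℂ :=
  fun r => (Real.sqrt R : ℂ)⁻¹ * dvec R ν r

/-- The operator `Ψ_K^{(m)}` associated with a spectral density `S`: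
`Ψ_K(B) = ∫₀¹ S(ν) (a_R(ν)ᴴ B a_R(ν)) d_K(ν) d_K(ν)ᴴ dν`. -/
def PsiOp (S : ℝ → ℝ) {R : ℕ} (K : ℕ) (B : Matrix (Fin R) (Fin R) ℂ) :
    Matrix (Fin K) (Fin K) ℂ :=
  fun i j => ∫ ν in (0:ℝ)..1,
    (S ν : ℂ) * (star (avec R ν) ⬝ᵥ B.mulVec (avec R ν))
      * (dvec K ν i * (starRingEnd ℂ) (dvec K ν j))

/-- Spectral norm (operator norm on Euclidean space) of a square complex matrix. -/
def specNorm {n : Type*} [Fintype n] [DecidableEq n] (A : Matrix n n ℂ) : ℝ :=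
  ‖Matrix.toEuclideanCLM (𝕜 := ℂ) A‖

/-! ### Auxiliary lemmas -/

lemma dvec_continuous (R : ℕ) (r : Fin R) : Continuous (fun ν => dvec R ν r) := by
  unfold dvec
  fun_prop

lemma dvec_norm (R : ℕ) (ν : ℝ) (r : Fin R) : ‖dvec R ν r‖ = 1 := by
  simp only [dvec, Complex.norm_exp]
  norm_num [Complex.mul_re, Complex.mul_im]

lemma dvec_mul_conj (K : ℕ) (ν : ℝ) (i j : Fin K) :
    dvec K ν i * (starRingEnd ℂ) (dvec K ν j)
      = Complex.exp ((2 * Real.pi * Complex.I * ((i : ℤ) - (j : ℤ))) * ν) := by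
  rw [dvec, dvec, ← Complex.exp_conj, ← Complex.exp_add]
  congr 1
  have : (starRingEnd ℂ) (2 * ↑Real.pi * Complex.I * ↑ν * ↑(j : ℕ))
      = -(2 * ↑Real.pi * Complex.I * ↑ν * ↑(j : ℕ)) := by
    simp only [_root_.map_mul, Complex.conj_I, Complex.conj_ofReal, map_ofNat,
      Complex.conj_natCast]
    ring
  rw [this]
  push_cast
  ring

lemma ortho (K : ℕ) (i j : Fin K) :
    (∫ ν in (0:ℝ)..1, dvec K ν i * (starRingEnd ℂ) (dvec K ν j))
      = if i = j then 1 else 0 := by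
  simp only [dvec_mul_conj]
  by_cases h : i = j
  · subst h
    simp
  · rw [if_neg h]
    have hc : (2 * (Real.pi:ℂ) * Complex.I * ((i : ℤ) - (j : ℤ))) ≠ 0 := by
      simp [Real.pi_ne_zero, Complex.I_ne_zero, sub_ne_zero]
      exact_mod_cast fun hh => h (Fin.ext (by exact_mod_cast hh))
    rw [integral_exp_mul_complex hc]
    push_cast
    rw [mul_one, mul_zero, Complex.exp_zero]
    have h1 : (2 * (Real.pi:ℂ) * Complex.I * (((i:ℕ):ℂ) - ((j:ℕ):ℂ)))
        = (((i:ℤ) - (j:ℤ) : ℤ) : ℂ) * (2 * (Real.pi:ℂ) * Complex.I) := by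
      push_cast; ring
    rw [h1, Complex.exp_int_mul_two_pi_mul_I, sub_self, zero_div]

/-- The trigonometric polynomial with coefficients `star c`. -/
def gvec (K : ℕ) (c : Fin K → ℂ) (ν : ℝ) : ℂ :=
  ∑ i, (starRingEnd ℂ) (c i) * dvec K ν i

lemma gvec_continuous (K : ℕ) (c : Fin K → ℂ) : Continuous (gvec K c) := by
  unfold gvec
  exact continuous_finset_sum _ fun i _ => (continuous_const.mul (dvec_continuous K i))

lemma gvec_bound (K : ℕ) (c : Fin K → ℂ) (ν : ℝ) : ‖gvec K c ν‖ ≤ ∑ i, ‖c i‖ := by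
  refine (norm_sum_le _ _).trans (le_of_eq (Finset.sum_congr rfl fun i _ => ?_))
  rw [norm_mul, dvec_norm, mul_one, RCLike.norm_conj]

lemma ortho' (K : ℕ) (i j : Fin K) :
    (∫ ν in Set.Ioc (0:ℝ) 1, dvec K ν i * (starRingEnd ℂ) (dvec K ν j))
      = if i = j then 1 else 0 := by
  rw [← intervalIntegral.integral_of_le zero_le_one, ortho]

lemma gvec_prod_integrable (K : ℕ) (c c' : Fin K → ℂ) :
    IntegrableOn (fun ν => gvec K c ν * (starRingEnd ℂ) (gvec K c' ν)) (Set.Ioc (0:ℝ) 1) := by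
  apply Continuous.integrableOn_Ioc
  exact (gvec_continuous K c).mul (Complex.continuous_conj.comp (gvec_continuous K c'))

lemma parseval_c (K : ℕ) (c : Fin K → ℂ) :
    (∫ ν in Set.Ioc (0:ℝ) 1, gvec K c ν * (starRingEnd ℂ) (gvec K c ν))
      = ∑ i, (Complex.normSq (c i) : ℂ) := by
  have hexp : ∀ ν : ℝ, gvec K c ν * (starRingEnd ℂ) (gvec K c ν)
      = ∑ i, ∑ j, ((starRingEnd ℂ) (c i) * c j)
          * (dvec K ν i * (starRingEnd ℂ) (dvec K ν j)) := by
    intro ν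
    rw [gvec, map_sum, Finset.sum_mul_sum]
    refine Finset.sum_congr rfl fun i _ => Finset.sum_congr rfl fun j _ => ?_
    simp only [_root_.map_mul, RingHomCompTriple.comp_apply, RingHom.id_apply,
      starRingEnd_self_apply]
    ring
  simp only [hexp]
  rw [integral_finset_sum]
  · refine Finset.sum_congr rfl fun i _ => ?_
    rw [integral_finset_sum]
    · rw [Finset.sum_congr rfl fun j (_ : j ∈ Finset.univ) => integral_const_mul _ _]
      simp only [ortho']
      rw [Finset.sum_eq_single i]
      · rw [if_pos rfl, mul_one, mul_comm, Complex.mul_conj]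
      · intro j _ hj; rw [if_neg (Ne.symm hj), mul_zero]
      · intro h; exact absurd (Finset.mem_univ i) h
    · intro j _
      apply Continuous.integrableOn_Ioc
      exact continuous_const.mul ((dvec_continuous K i).mul
        (Complex.continuous_conj.comp (dvec_continuous K j)))
  · intro i _
    apply Continuous.integrableOn_Ioc
    exact continuous_finset_sum _ fun j _ => continuous_const.mul ((dvec_continuous K i).mul
        (Complex.continuous_conj.comp (dvec_continuous K j)))

lemma parseval (K : ℕ) (c : Fin K → ℂ) :
    (∫ ν in Set.Ioc (0:ℝ) 1, ‖gvec K c ν‖ ^ 2) = ∑ i, ‖c i‖ ^ 2 := by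
  have h1 : ∀ ν : ℝ, ‖gvec K c ν‖ ^ 2
      = RCLike.re (gvec K c ν * (starRingEnd ℂ) (gvec K c ν)) := by
    intro ν
    rw [Complex.mul_conj]
    simp only [RCLike.re_to_complex, Complex.ofReal_re, Complex.normSq_eq_norm_sq]
  simp only [h1]
  rw [_root_.integral_re (gvec_prod_integrable K c c), parseval_c, map_sum]
  refine Finset.sum_congr rfl fun i _ => ?_
  simp [Complex.normSq_eq_norm_sq, ← Complex.ofReal_pow]

lemma memLp2 (K : ℕ) (c : Fin K → ℂ) :
    MemLp (fun ν => ‖gvec K c ν‖) (ENNReal.ofReal 2)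
      (volume.restrict (Set.Ioc (0:ℝ) 1)) := by
  have : Fact ((volume : Measure ℝ) (Set.Ioc 0 1) < ⊤) := ⟨by simp⟩
  have : IsFiniteMeasure (volume.restrict (Set.Ioc (0:ℝ) 1)) :=
    Restrict.isFiniteMeasure _
  exact MemLp.of_bound ((gvec_continuous K c).norm.aestronglyMeasurable) (∑ i, ‖c i‖)
    (Filter.Eventually.of_forall fun ν => by
      rw [Real.norm_of_nonneg (norm_nonneg _)]; exact gvec_bound K c ν)

lemma cauchy_schwarz (K : ℕ) (c c' : Fin K → ℂ) :
    (∫ ν in Set.Ioc (0:ℝ) 1, ‖gvec K c ν‖ * ‖gvec K c' ν‖)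
      ≤ Real.sqrt (∑ i, ‖c i‖ ^ 2) * Real.sqrt (∑ i, ‖c' i‖ ^ 2) := by
  have hpq : Real.HolderConjugate 2 2 := Real.holderConjugate_iff.mpr ⟨by norm_num, by norm_num⟩
  have h := MeasureTheory.integral_mul_le_Lp_mul_Lq_of_nonneg hpq
    (f := fun ν => ‖gvec K c ν‖) (g := fun ν => ‖gvec K c' ν‖)
    (Filter.Eventually.of_forall fun ν => norm_nonneg _)
    (Filter.Eventually.of_forall fun ν => norm_nonneg _)
    (memLp2 K c) (memLp2 K c')
  have h2 : ∀ x : ℝ, 0 ≤ x → x ^ (2:ℝ) = x ^ 2 := fun x hx => by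
    rw [show (2:ℝ) = ((2:ℕ):ℝ) by norm_num, Real.rpow_natCast]
  simp only [h2 _ (norm_nonneg _)] at h
  rw [parseval, parseval] at h
  calc (∫ ν in Set.Ioc (0:ℝ) 1, ‖gvec K c ν‖ * ‖gvec K c' ν‖)
      ≤ (∑ i, ‖c i‖ ^ 2) ^ ((1:ℝ)/2) * (∑ i, ‖c' i‖ ^ 2) ^ ((1:ℝ)/2) := h
    _ = _ := by rw [← Real.sqrt_eq_rpow, ← Real.sqrt_eq_rpow]

lemma key (K : ℕ) (F : ℝ → ℂ) (hF : ContinuousOn F (Set.Icc 0 1)) (C : ℝ)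
    (hC : ∀ ν ∈ Set.Icc (0:ℝ) 1, ‖F ν‖ ≤ C) (x y : Fin K → ℂ) :
    ‖∑ i, (starRingEnd ℂ) (y i) *
        (∑ j, (∫ ν in (0:ℝ)..1, F ν * (dvec K ν i * (starRingEnd ℂ) (dvec K ν j))) * x j)‖
      ≤ C * (Real.sqrt (∑ i, ‖y i‖ ^ 2) * Real.sqrt (∑ i, ‖x i‖ ^ 2)) := by
  have hFI : ∀ (G : ℝ → ℂ), Continuous G →
      IntegrableOn (fun ν => F ν * G ν) (Set.Ioc (0:ℝ) 1) := by
    intro G hG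
    exact ((hF.mul hG.continuousOn).integrableOn_Icc).mono_set Set.Ioc_subset_Icc_self
  have hterm : ∀ i j : Fin K, (starRingEnd ℂ) (y i) *
        ((∫ ν in (0:ℝ)..1, F ν * (dvec K ν i * (starRingEnd ℂ) (dvec K ν j))) * x j)
      = ∫ ν in Set.Ioc (0:ℝ) 1,
          (starRingEnd ℂ) (y i) * (F ν * (dvec K ν i * (starRingEnd ℂ) (dvec K ν j))) * x j := by
    intro i j
    rw [← intervalIntegral.integral_of_le zero_le_one] at *
    rw [intervalIntegral.integral_mul_const, intervalIntegral.integral_const_mul, mul_assoc]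
  have hsum : (∑ i, (starRingEnd ℂ) (y i) *
        (∑ j, (∫ ν in (0:ℝ)..1, F ν * (dvec K ν i * (starRingEnd ℂ) (dvec K ν j))) * x j))
      = ∫ ν in Set.Ioc (0:ℝ) 1, F ν * (gvec K y ν * (starRingEnd ℂ) (gvec K x ν)) := by
    have hint : ∀ i j : Fin K, IntegrableOn (fun ν =>
        (starRingEnd ℂ) (y i) * (F ν * (dvec K ν i * (starRingEnd ℂ) (dvec K ν j))) * x j)
        (Set.Ioc (0:ℝ) 1) := by
      intro i j
      have := ((hFI _ ((dvec_continuous K i).mul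
        (Complex.continuous_conj.comp (dvec_continuous K j)))).const_mul
          ((starRingEnd ℂ) (y i))).mul_const (x j)
      simpa [Function.comp, IntegrableOn] using this
    calc (∑ i, (starRingEnd ℂ) (y i) *
        (∑ j, (∫ ν in (0:ℝ)..1, F ν * (dvec K ν i * (starRingEnd ℂ) (dvec K ν j))) * x j))
        = ∑ i, ∑ j, ∫ ν in Set.Ioc (0:ℝ) 1,
            (starRingEnd ℂ) (y i) * (F ν * (dvec K ν i * (starRingEnd ℂ) (dvec K ν j))) * x j := by
          refine Finset.sum_congr rfl fun i _ => ?_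
          rw [Finset.mul_sum]
          exact Finset.sum_congr rfl fun j _ => hterm i j
      _ = ∫ ν in Set.Ioc (0:ℝ) 1, ∑ i, ∑ j,
            (starRingEnd ℂ) (y i) * (F ν * (dvec K ν i * (starRingEnd ℂ) (dvec K ν j))) * x j := by
          rw [integral_finset_sum _ fun i _ => integrable_finset_sum _ fun j _ => hint i j]
          exact Finset.sum_congr rfl fun i _ =>
            (integral_finset_sum _ fun j _ => hint i j).symm
      _ = _ := by
          refine integral_congr_ae (Filter.Eventually.of_forall fun ν => ?_)
          simp only [gvec, map_sum, _root_.map_mul, RingHomCompTriple.comp_apply,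
            RingHom.id_apply, starRingEnd_self_apply, Finset.mul_sum, Finset.sum_mul]
          rw [Finset.sum_comm]
          refine Finset.sum_congr rfl fun i _ => Finset.sum_congr rfl fun j _ => by ring
  rw [hsum]
  have hC0 : 0 ≤ C := le_trans (norm_nonneg _) (hC 0 (by norm_num))
  calc ‖∫ ν in Set.Ioc (0:ℝ) 1, F ν * (gvec K y ν * (starRingEnd ℂ) (gvec K x ν))‖
      ≤ ∫ ν in Set.Ioc (0:ℝ) 1, ‖F ν * (gvec K y ν * (starRingEnd ℂ) (gvec K x ν))‖ :=
        norm_integral_le_integral_norm _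
    _ ≤ ∫ ν in Set.Ioc (0:ℝ) 1, C * (‖gvec K y ν‖ * ‖gvec K x ν‖) := by
        refine setIntegral_mono_on ?_ ?_ measurableSet_Ioc ?_
        · exact (hFI _ ((gvec_continuous K y).mul
            (Complex.continuous_conj.comp (gvec_continuous K x)))).norm
        · exact (Continuous.integrableOn_Ioc
            ((gvec_continuous K y).norm.mul (gvec_continuous K x).norm)).const_mul C
        · intro ν hν
          rw [norm_mul, norm_mul, RCLike.norm_conj]
          exact mul_le_mul_of_nonneg_right (hC ν (Set.Ioc_subset_Icc_self hν))
            (mul_nonneg (norm_nonneg _) (norm_nonneg _))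
    _ = C * ∫ ν in Set.Ioc (0:ℝ) 1, ‖gvec K y ν‖ * ‖gvec K x ν‖ := integral_const_mul _ _
    _ ≤ _ := mul_le_mul_of_nonneg_left (cauchy_schwarz K y x) hC0

lemma toCLM_apply {n : ℕ} (A : Matrix (Fin n) (Fin n) ℂ) (v : EuclideanSpace ℂ (Fin n))
    (i : Fin n) : (Matrix.toEuclideanCLM (𝕜 := ℂ) A v) i = A.mulVec (fun j => v j) i := by
  have h := Matrix.ofLp_toEuclideanCLM (𝕜 := ℂ) A v
  have := congrFun h i
  simpa [Matrix.toLin'_apply] using this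

lemma quad_bound {R : ℕ} (hR : 0 < R) (B : Matrix (Fin R) (Fin R) ℂ) (ν : ℝ) :
    ‖star (avec R ν) ⬝ᵥ B.mulVec (avec R ν)‖ ≤ specNorm B := by
  set a : EuclideanSpace ℂ (Fin R) := (WithLp.equiv 2 (Fin R → ℂ)).symm (avec R ν) with ha
  have hai : ∀ i, a i = avec R ν i := fun i => rfl
  have hnorm : ‖a‖ = 1 := by
    rw [EuclideanSpace.norm_eq]
    have : ∀ i : Fin R, ‖a i‖ ^ 2 = (R : ℝ)⁻¹ := by
      intro i
      rw [hai, avec, norm_mul, dvec_norm, mul_one, norm_inv, Complex.norm_real,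
        Real.norm_of_nonneg (Real.sqrt_nonneg _), inv_pow, Real.sq_sqrt (Nat.cast_nonneg R)]
    rw [Finset.sum_congr rfl fun i _ => this i, Finset.sum_const, Finset.card_univ,
      Fintype.card_fin, nsmul_eq_mul, mul_inv_cancel₀ (by exact_mod_cast hR.ne'),
      Real.sqrt_one]
  have hinner : star (avec R ν) ⬝ᵥ B.mulVec (avec R ν)
      = inner ℂ a (Matrix.toEuclideanCLM (𝕜 := ℂ) B a) := by
    rw [PiLp.inner_apply]
    simp only [RCLike.inner_apply, toCLM_apply]
    rw [dotProduct_comm]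
    rfl
  rw [hinner]
  calc ‖(inner ℂ a (Matrix.toEuclideanCLM (𝕜 := ℂ) B a) : ℂ)‖
      ≤ ‖a‖ * ‖Matrix.toEuclideanCLM (𝕜 := ℂ) B a‖ := norm_inner_le_norm _ _
    _ ≤ ‖a‖ * (specNorm B * ‖a‖) := by
        exact mul_le_mul_of_nonneg_left
          ((Matrix.toEuclideanCLM (𝕜 := ℂ) B).le_opNorm a) (norm_nonneg _)
    _ = specNorm B := by rw [hnorm]; ring

theorem statement1 (K R : ℕ) (hK : 0 < K) (hR : 0 < R) (S : ℝ → ℝ)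
    (hScont : ContinuousOn S (Set.Icc 0 1)) (hSpos : ∀ ν ∈ Set.Icc (0:ℝ) 1, 0 < S ν)
    (B : Matrix (Fin R) (Fin R) ℂ) :
    specNorm (PsiOp S K B)
        ≤ (⨆ ν : Set.Icc (0:ℝ) 1,
            ‖(S ν.1 : ℂ) * (star (avec R ν.1) ⬝ᵥ B.mulVec (avec R ν.1))‖) ∧
      (⨆ ν : Set.Icc (0:ℝ) 1,
            ‖(S ν.1 : ℂ) * (star (avec R ν.1) ⬝ᵥ B.mulVec (avec R ν.1))‖)
        ≤ (⨆ ν : Set.Icc (0:ℝ) 1, |S ν.1|) * specNorm B := by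
  haveI : Nonempty (Set.Icc (0:ℝ) 1) := ⟨⟨0, by norm_num⟩⟩
  set F : ℝ → ℂ := fun ν => (S ν : ℂ) * (star (avec R ν) ⬝ᵥ B.mulVec (avec R ν)) with hFdef
  have hquadcont : Continuous (fun ν => star (avec R ν) ⬝ᵥ B.mulVec (avec R ν)) := by
    simp only [Matrix.mulVec, dotProduct, avec, dvec, Pi.star_apply]
    fun_prop
  have hFc : ContinuousOn F (Set.Icc 0 1) :=
    (Complex.continuous_ofReal.comp_continuousOn hScont).mul hquadcont.continuousOn
  have habsFc : ContinuousOn (fun ν => ‖F ν‖) (Set.Icc 0 1) :=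
    hFc.norm
  have hbdd : BddAbove (Set.range fun ν : Set.Icc (0:ℝ) 1 => ‖F ν.1‖) := by
    have := (isCompact_Icc.image_of_continuousOn habsFc).bddAbove
    rwa [Set.image_eq_range] at this
  set Csup : ℝ := ⨆ ν : Set.Icc (0:ℝ) 1, ‖F ν.1‖ with hCdef
  have hCle : ∀ ν ∈ Set.Icc (0:ℝ) 1, ‖F ν‖ ≤ Csup := by
    intro ν hν
    exact le_ciSup hbdd (⟨ν, hν⟩ : Set.Icc (0:ℝ) 1)
  have hC0 : 0 ≤ Csup := le_trans (norm_nonneg _) (hCle 0 (by norm_num))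
  constructor
  · -- first inequality
    rw [specNorm]
    refine ContinuousLinearMap.opNorm_le_bound _ hC0 fun v => ?_
    set T := Matrix.toEuclideanCLM (𝕜 := ℂ) (PsiOp S K B)
    set w : EuclideanSpace ℂ (Fin K) := T v with hw
    have hkey := key K F hFc Csup hCle (fun j => v j) (fun i => w i)
    have hwi : ∀ i : Fin K,
        (∑ j, (∫ ν in (0:ℝ)..1, F ν * (dvec K ν i * (starRingEnd ℂ) (dvec K ν j))) * v j)
          = w i := by
      intro i
      rw [hw, toCLM_apply]
      simp only [Matrix.mulVec, dotProduct, PsiOp, hFdef]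
    have hinner : (∑ i, (starRingEnd ℂ) (w i) *
        (∑ j, (∫ ν in (0:ℝ)..1, F ν * (dvec K ν i * (starRingEnd ℂ) (dvec K ν j))) * v j))
        = (((∑ i, ‖w i‖ ^ 2 : ℝ)) : ℂ) := by
      simp only [hwi]
      push_cast
      refine Finset.sum_congr rfl fun i _ => ?_
      rw [mul_comm, Complex.mul_conj]
      push_cast [Complex.normSq_eq_norm_sq]
      ring
    rw [hinner] at hkey
    have hsum_nonneg : (0:ℝ) ≤ ∑ i, ‖w i‖ ^ 2 := Finset.sum_nonneg fun i _ => sq_nonneg _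
    rw [Complex.norm_real, Real.norm_of_nonneg hsum_nonneg] at hkey
    have hwnorm : ‖w‖ = Real.sqrt (∑ i, ‖w i‖ ^ 2) := EuclideanSpace.norm_eq w
    have hvnorm : ‖v‖ = Real.sqrt (∑ i, ‖v i‖ ^ 2) := EuclideanSpace.norm_eq v
    have hw2 : ‖w‖ ^ 2 = ∑ i, ‖w i‖ ^ 2 := by
      rw [hwnorm, Real.sq_sqrt hsum_nonneg]
    rw [← hwnorm, ← hvnorm, ← hw2] at hkey
    rcases eq_or_lt_of_le (norm_nonneg w) with h0 | h0
    · rw [← h0]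
      positivity
    · have : ‖w‖ * ‖w‖ ≤ ‖w‖ * (Csup * ‖v‖) := by nlinarith
      exact le_of_mul_le_mul_left this h0
  · -- second inequality
    have hSbdd : BddAbove (Set.range fun ν : Set.Icc (0:ℝ) 1 => |S ν.1|) := by
      have habs : ContinuousOn (fun ν => |S ν|) (Set.Icc (0:ℝ) 1) := hScont.abs
      have := (isCompact_Icc.image_of_continuousOn habs).bddAbove
      rwa [Set.image_eq_range] at this
    have hS0 : (0:ℝ) ≤ ⨆ ν : Set.Icc (0:ℝ) 1, |S ν.1| :=
      le_trans (abs_nonneg _) (le_ciSup hSbdd (⟨0, by norm_num⟩ : Set.Icc (0:ℝ) 1))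
    refine ciSup_le fun ν => ?_
    calc ‖(S ν.1 : ℂ) * (star (avec R ν.1) ⬝ᵥ B.mulVec (avec R ν.1))‖
        = |S ν.1| * ‖star (avec R ν.1) ⬝ᵥ B.mulVec (avec R ν.1)‖ := by
          rw [norm_mul, Complex.norm_real, Real.norm_eq_abs]
      _ ≤ (⨆ ν : Set.Icc (0:ℝ) 1, |S ν.1|) * specNorm B :=
          mul_le_mul (le_ciSup hSbdd ν) (quad_bound hR B ν.1) (norm_nonneg _) hS0
end
end

section
/- For every ML×ML complex matrix A and every N×N complex matrix B, one has (1/N)·tr[Ψ̄(A) B] = (1/(ML))·tr[A Ψ(B)]. -/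
open MeasureTheory ProbabilityTheory Matrix Complex Filter
open scoped ComplexOrder

noncomputable section

/-- The block-diagonal operator `Ψ` : for an `N×N` matrix `B`, `Ψ(B)` is the `ML×ML`
block-diagonal matrix with `m`-th diagonal block `Ψ_L^{(m)}(B)`. -/
def PsiBlock (L : ℕ) {M N : ℕ} (S : Fin M → ℝ → ℝ) (B : Matrix (Fin N) (Fin N) ℂ) :
    Matrix (Fin M × Fin L) (Fin M × Fin L) ℂ :=
  fun p q => if p.1 = q.1 then PsiOp (S p.1) L B p.2 q.2 else 0

/-- The `m`-th diagonal `L×L` block of an `ML×ML` matrix. -/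
def diagBlock {L M : ℕ} (A : Matrix (Fin M × Fin L) (Fin M × Fin L) ℂ) (m : Fin M) :
    Matrix (Fin L) (Fin L) ℂ :=
  fun i j => A (m, i) (m, j)

/-- The operator `Ψ̄` : `Ψ̄(A) = (1/M) Σ_m Ψ_N^{(m)}(A^{m,m})`. -/
def PsiBar (N : ℕ) {L M : ℕ} (S : Fin M → ℝ → ℝ)
    (A : Matrix (Fin M × Fin L) (Fin M × Fin L) ℂ) : Matrix (Fin N) (Fin N) ℂ :=
  (M : ℂ)⁻¹ • ∑ m : Fin M, PsiOp (S m) N (diagBlock A m)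

lemma cont_dvec (R : ℕ) (r : Fin R) : Continuous fun ν : ℝ => dvec R ν r := by
  unfold dvec; fun_prop

lemma cont_dd (K : ℕ) (i j : Fin K) :
    Continuous fun ν : ℝ => dvec K ν i * (starRingEnd ℂ) (dvec K ν j) := by
  simp only [starRingEnd_apply]
  exact (cont_dvec K i).mul (cont_dvec K j).star

lemma cont_quad {R : ℕ} (C : Matrix (Fin R) (Fin R) ℂ) :
    Continuous fun ν : ℝ => star (avec R ν) ⬝ᵥ C.mulVec (avec R ν) := by
  simp only [dotProduct, mulVec, avec, Pi.star_apply, RCLike.star_def]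
  apply continuous_finset_sum
  intro j _
  exact ((continuous_const.mul (cont_dvec R j)).star).mul
    (continuous_finset_sum _ fun i _ => continuous_const.mul (continuous_const.mul (cont_dvec R i)))

lemma sum_dvec {R : ℕ} (hR : 0 < R) (C : Matrix (Fin R) (Fin R) ℂ) (ν : ℝ) :
    ∑ i, ∑ j, dvec R ν i * (starRingEnd ℂ) (dvec R ν j) * C j i
      = (R : ℂ) * (star (avec R ν) ⬝ᵥ C.mulVec (avec R ν)) := by
  have h1 : (R:ℂ) * (((Real.sqrt R : ℝ):ℂ)⁻¹ * ((Real.sqrt R : ℝ):ℂ)⁻¹) = 1 := by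
    rw [← mul_inv, ← Complex.ofReal_mul, Real.mul_self_sqrt (Nat.cast_nonneg R)]
    rw [Complex.ofReal_natCast]
    exact mul_inv_cancel₀ (Nat.cast_ne_zero.2 hR.ne')
  simp only [dotProduct, mulVec, avec, Pi.star_apply, RCLike.star_def, _root_.map_mul, map_inv₀,
    Complex.conj_ofReal, Finset.mul_sum]
  rw [Finset.sum_comm]
  apply Finset.sum_congr rfl
  intro j _
  apply Finset.sum_congr rfl
  intro i _
  linear_combination (-((starRingEnd ℂ) (dvec R ν j) * C j i * dvec R ν i)) * h1

lemma sum_comm3 {M N : ℕ} (g : Fin M → Fin N → Fin N → ℂ) :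
    ∑ i, ∑ j, ∑ m, g m i j = ∑ m, ∑ i, ∑ j, g m i j := by
  rw [show (∑ i, ∑ j, ∑ m, g m i j) = ∑ i, ∑ m, ∑ j, g m i j from
    Finset.sum_congr rfl fun i _ => Finset.sum_comm, Finset.sum_comm]

lemma swap_sum_integral {K : ℕ} (g : Fin K → Fin K → ℝ → ℂ)
    (h : ∀ i j, IntervalIntegrable (g i j) volume 0 1) :
    ∑ i : Fin K, ∑ j : Fin K, ∫ ν in (0:ℝ)..1, g i j ν
      = ∫ ν in (0:ℝ)..1, ∑ i : Fin K, ∑ j : Fin K, g i j ν := by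
  have h2 : ∀ i : Fin K, IntervalIntegrable (fun ν => ∑ j : Fin K, g i j ν) volume 0 1 := by
    intro i
    have := IntervalIntegrable.sum (μ := volume) (a := (0:ℝ)) (b := 1) Finset.univ
      (f := fun j => g i j) (fun j _ => h i j)
    have heq : (∑ j : Fin K, g i j) = fun ν => ∑ j : Fin K, g i j ν := by
      funext ν; simp
    rw [← heq]
    exact this
  calc ∑ i : Fin K, ∑ j : Fin K, ∫ ν in (0:ℝ)..1, g i j ν
      = ∑ i : Fin K, ∫ ν in (0:ℝ)..1, ∑ j : Fin K, g i j ν :=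
        Finset.sum_congr rfl fun i _ => (intervalIntegral.integral_finset_sum fun j _ => h i j).symm
    _ = ∫ ν in (0:ℝ)..1, ∑ i : Fin K, ∑ j : Fin K, g i j ν :=
        (intervalIntegral.integral_finset_sum fun i _ => h2 i).symm

lemma lhs_m {L N : ℕ} (hN : 0 < N) (Sm : ℝ → ℝ) (hSm : ContinuousOn Sm (Set.Icc 0 1))
    (C : Matrix (Fin L) (Fin L) ℂ) (B : Matrix (Fin N) (Fin N) ℂ) :
    ∑ i : Fin N, ∑ j : Fin N, (∫ ν in (0:ℝ)..1, (Sm ν : ℂ)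
        * (star (avec L ν) ⬝ᵥ C.mulVec (avec L ν))
        * (dvec N ν i * (starRingEnd ℂ) (dvec N ν j))) * B j i
    = (N:ℂ) * ∫ ν in (0:ℝ)..1, (Sm ν : ℂ) * (star (avec L ν) ⬝ᵥ C.mulVec (avec L ν))
        * (star (avec N ν) ⬝ᵥ B.mulVec (avec N ν)) := by
  have hint : ∀ f : ℝ → ℂ, Continuous f →
      IntervalIntegrable (fun ν => (Sm ν : ℂ) * f ν) volume 0 1 := by
    intro f hf
    apply ContinuousOn.intervalIntegrable
    rw [Set.uIcc_of_le zero_le_one]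
    exact (Complex.continuous_ofReal.comp_continuousOn hSm).mul hf.continuousOn
  have h1 : ∀ i j : Fin N, IntervalIntegrable (fun ν => (Sm ν : ℂ)
      * (star (avec L ν) ⬝ᵥ C.mulVec (avec L ν))
      * (dvec N ν i * (starRingEnd ℂ) (dvec N ν j)) * B j i) volume 0 1 := by
    intro i j
    have := hint (fun ν => (star (avec L ν) ⬝ᵥ C.mulVec (avec L ν))
        * (dvec N ν i * (starRingEnd ℂ) (dvec N ν j)) * B j i)
      (((cont_quad C).mul (cont_dd N i j)).mul continuous_const)
    simpa [mul_assoc] using this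
  simp only [← intervalIntegral.integral_mul_const]
  rw [swap_sum_integral _ h1, ← intervalIntegral.integral_const_mul]
  congr 1
  funext ν
  have hs := sum_dvec hN B ν
  calc ∑ i : Fin N, ∑ j : Fin N, (Sm ν : ℂ) * (star (avec L ν) ⬝ᵥ C.mulVec (avec L ν))
        * (dvec N ν i * (starRingEnd ℂ) (dvec N ν j)) * B j i
      = ((Sm ν : ℂ) * (star (avec L ν) ⬝ᵥ C.mulVec (avec L ν)))
        * ∑ i : Fin N, ∑ j : Fin N, dvec N ν i * (starRingEnd ℂ) (dvec N ν j) * B j i := by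
        rw [Finset.mul_sum]
        refine Finset.sum_congr rfl fun i _ => ?_
        rw [Finset.mul_sum]
        exact Finset.sum_congr rfl fun j _ => by ring
    _ = _ := by rw [hs]; ring

lemma rhs_m {L N : ℕ} (hL : 0 < L) (Sm : ℝ → ℝ) (hSm : ContinuousOn Sm (Set.Icc 0 1))
    (C : Matrix (Fin L) (Fin L) ℂ) (B : Matrix (Fin N) (Fin N) ℂ) :
    ∑ i : Fin L, ∑ j : Fin L, C i j * ∫ ν in (0:ℝ)..1, (Sm ν : ℂ)
        * (star (avec N ν) ⬝ᵥ B.mulVec (avec N ν))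
        * (dvec L ν j * (starRingEnd ℂ) (dvec L ν i))
    = (L:ℂ) * ∫ ν in (0:ℝ)..1, (Sm ν : ℂ) * (star (avec L ν) ⬝ᵥ C.mulVec (avec L ν))
        * (star (avec N ν) ⬝ᵥ B.mulVec (avec N ν)) := by
  have hint : ∀ f : ℝ → ℂ, Continuous f →
      IntervalIntegrable (fun ν => (Sm ν : ℂ) * f ν) volume 0 1 := by
    intro f hf
    apply ContinuousOn.intervalIntegrable
    rw [Set.uIcc_of_le zero_le_one]
    exact (Complex.continuous_ofReal.comp_continuousOn hSm).mul hf.continuousOn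
  have h1 : ∀ i j : Fin L, IntervalIntegrable (fun ν => C i j * ((Sm ν : ℂ)
      * (star (avec N ν) ⬝ᵥ B.mulVec (avec N ν))
      * (dvec L ν j * (starRingEnd ℂ) (dvec L ν i)))) volume 0 1 := by
    intro i j
    have := hint (fun ν => (star (avec N ν) ⬝ᵥ B.mulVec (avec N ν))
        * (dvec L ν j * (starRingEnd ℂ) (dvec L ν i)) * C i j)
      (((cont_quad B).mul (cont_dd L j i)).mul continuous_const)
    simpa [mul_assoc, mul_comm, mul_left_comm] using this
  simp only [← intervalIntegral.integral_const_mul]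
  rw [swap_sum_integral _ h1]
  congr 1
  funext ν
  have hs : ∑ i : Fin L, ∑ j : Fin L,
      dvec L ν j * (starRingEnd ℂ) (dvec L ν i) * C i j
      = (L:ℂ) * (star (avec L ν) ⬝ᵥ C.mulVec (avec L ν)) := by
    rw [Finset.sum_comm]
    exact sum_dvec hL C ν
  calc ∑ i : Fin L, ∑ j : Fin L, C i j * ((Sm ν : ℂ)
        * (star (avec N ν) ⬝ᵥ B.mulVec (avec N ν))
        * (dvec L ν j * (starRingEnd ℂ) (dvec L ν i)))
      = ((Sm ν : ℂ) * (star (avec N ν) ⬝ᵥ B.mulVec (avec N ν)))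
        * ∑ i : Fin L, ∑ j : Fin L, dvec L ν j * (starRingEnd ℂ) (dvec L ν i) * C i j := by
        rw [Finset.mul_sum]
        refine Finset.sum_congr rfl fun i _ => ?_
        rw [Finset.mul_sum]
        exact Finset.sum_congr rfl fun j _ => by ring
    _ = _ := by rw [hs]; ring

set_option maxHeartbeats 1000000 in
/-- For every `ML×ML` matrix `A` and `N×N` matrix `B`,
`(1/N)·tr[Ψ̄(A) B] = (1/(ML))·tr[A Ψ(B)]`. -/
theorem statement3 (L M N : ℕ) (hL : 0 < L) (hM : 0 < M) (hN : 0 < N)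
    (S : Fin M → ℝ → ℝ) (hScont : ∀ m, ContinuousOn (S m) (Set.Icc 0 1))
    (hSpos : ∀ m, ∀ ν ∈ Set.Icc (0:ℝ) 1, 0 < S m ν)
    (A : Matrix (Fin M × Fin L) (Fin M × Fin L) ℂ) (B : Matrix (Fin N) (Fin N) ℂ) :
    (N : ℂ)⁻¹ * (PsiBar N S A * B).trace
      = ((M * L : ℕ) : ℂ)⁻¹ * (A * PsiBlock L S B).trace := by
  have hLHS : (PsiBar N S A * B).trace
      = (M:ℂ)⁻¹ * ∑ m : Fin M, ((N:ℂ) * ∫ ν in (0:ℝ)..1,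
          (S m ν : ℂ) * (star (avec L ν) ⬝ᵥ (diagBlock A m).mulVec (avec L ν))
            * (star (avec N ν) ⬝ᵥ B.mulVec (avec N ν))) := by
    calc (PsiBar N S A * B).trace
        = ∑ i : Fin N, ∑ j : Fin N, ((M:ℂ)⁻¹ * ∑ m : Fin M,
            (∫ ν in (0:ℝ)..1, (S m ν : ℂ)
              * (star (avec L ν) ⬝ᵥ (diagBlock A m).mulVec (avec L ν))
              * (dvec N ν i * (starRingEnd ℂ) (dvec N ν j)))) * B j i := by
          simp [Matrix.trace, Matrix.diag, Matrix.mul_apply, PsiBar, Matrix.smul_apply,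
            Matrix.sum_apply, PsiOp, smul_eq_mul]
      _ = (M:ℂ)⁻¹ * ∑ m : Fin M, ∑ i : Fin N, ∑ j : Fin N,
            (∫ ν in (0:ℝ)..1, (S m ν : ℂ)
              * (star (avec L ν) ⬝ᵥ (diagBlock A m).mulVec (avec L ν))
              * (dvec N ν i * (starRingEnd ℂ) (dvec N ν j))) * B j i := by
          simp only [mul_assoc, Finset.sum_mul, ← Finset.mul_sum]
          rw [← sum_comm3]
      _ = _ := by
          rw [Finset.sum_congr rfl fun m _ => lhs_m hN (S m) (hScont m) (diagBlock A m) B]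
  have hRHS : (A * PsiBlock L S B).trace
      = ∑ m : Fin M, ((L:ℂ) * ∫ ν in (0:ℝ)..1,
          (S m ν : ℂ) * (star (avec L ν) ⬝ᵥ (diagBlock A m).mulVec (avec L ν))
            * (star (avec N ν) ⬝ᵥ B.mulVec (avec N ν))) := by
    have h0 : (A * PsiBlock L S B).trace
        = ∑ m : Fin M, ∑ i : Fin L, ∑ j : Fin L,
            A (m, i) (m, j) * PsiOp (S m) L B j i := by
      simp [Matrix.trace, Matrix.diag, Matrix.mul_apply, PsiBlock, Fintype.sum_prod_type,
        mul_ite, mul_zero, Finset.sum_ite_eq]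
    rw [h0]
    refine Finset.sum_congr rfl fun m _ => ?_
    have := rhs_m hL (S m) (hScont m) (diagBlock A m) B
    simpa only [PsiOp, diagBlock] using this
  rw [hLHS, hRHS]
  rw [← Finset.mul_sum, ← Finset.mul_sum]
  have hN' : (N:ℂ) ≠ 0 := Nat.cast_ne_zero.2 hN.ne'
  have hM' : (M:ℂ) ≠ 0 := Nat.cast_ne_zero.2 hM.ne'
  have hL' : (L:ℂ) ≠ 0 := Nat.cast_ne_zero.2 hL.ne'
  push_cast
  field_simp
end
end

section
/- Let μ be a probability measure on [0,∞) and z ∈ ℂ∖[0,∞). Then the Stieltjes transform ξ(z) = ∫_{[0,∞)} (λ−z)^{−1} dμ(λ) satisfies |ξ(z)| ≥ δ_z · ∫_{[0,∞)} |λ−z|^{−2} dμ(λ), where δ_z = dist(z, [0,∞)). -/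
open MeasureTheory ProbabilityTheory Matrix Complex Filter
open scoped ComplexOrder

noncomputable section

/-- If `μ` is a probability measure carried by `[0,∞)` and
`z ∈ ℂ∖[0,∞)`, then the Stieltjes transform `ξ(z) = ∫ (λ−z)⁻¹ dμ(λ)` satisfies
`|ξ(z)| ≥ δ_z · ∫ |λ−z|⁻² dμ(λ)`. -/
theorem statement4 (μ : Measure ℝ) [IsProbabilityMeasure μ]
    (hsupp : μ (Set.Iio 0) = 0) (z : ℂ) (hz : z ∉ RPlus) :
    deltaZ z * ∫ lam, (‖(lam : ℂ) - z‖ ^ 2)⁻¹ ∂μ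
      ≤ ‖∫ lam, ((lam : ℂ) - z)⁻¹ ∂μ‖ := by
  have hae : ∀ᵐ lam ∂μ, 0 ≤ lam := by
    rw [ae_iff]
    simpa [Set.Iio_def, not_le] using hsupp
  -- lower bound on |λ - z|
  set c : ℝ := if 0 ≤ z.re then |z.im| else -z.re with hc
  have hzim : 0 ≤ z.re → z.im ≠ 0 := by
    intro h him
    exact hz ⟨z.re, h, by apply Complex.ext <;> simp [him]⟩
  have hcpos : 0 < c := by
    by_cases h : 0 ≤ z.re
    · simpa [hc, h] using hzim h
    · simp only [hc, if_neg h]; linarith [not_le.mp h]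
  have hlb : ∀ lam : ℝ, 0 ≤ lam → c ≤ ‖(lam : ℂ) - z‖ := by
    intro lam hl
    by_cases h : 0 ≤ z.re
    · simp only [hc, if_pos h]
      calc |z.im| = |((lam : ℂ) - z).im| := by simp
        _ ≤ ‖_‖ := Complex.abs_im_le_norm _
    · simp only [hc, if_neg h]
      have h' := not_le.mp h
      calc -z.re ≤ |((lam : ℂ) - z).re| := by
            simp only [Complex.sub_re, Complex.ofReal_re]
            rw [_root_.abs_of_nonneg (by linarith)]; linarith
        _ ≤ ‖_‖ := Complex.abs_re_le_norm _
  -- integrability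
  have hm1 : Measurable fun lam : ℝ => ((lam : ℂ) - z)⁻¹ :=
    ((Complex.measurable_ofReal.sub measurable_const).inv)
  have hint1 : Integrable (fun lam : ℝ => ((lam : ℂ) - z)⁻¹) μ := by
    refine Integrable.mono' (integrable_const c⁻¹) hm1.aestronglyMeasurable ?_
    filter_upwards [hae] with lam hl
    rw [norm_inv]
    exact inv_anti₀ hcpos (hlb lam hl)
  have hm2 : Measurable fun lam : ℝ => (‖(lam : ℂ) - z‖ ^ 2)⁻¹ :=
    (((Complex.measurable_ofReal.sub measurable_const).norm.pow_const 2).inv)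
  have hint2 : Integrable (fun lam : ℝ => (‖(lam : ℂ) - z‖ ^ 2)⁻¹) μ := by
    refine Integrable.mono' (integrable_const ((c ^ 2)⁻¹)) hm2.aestronglyMeasurable ?_
    filter_upwards [hae] with lam hl
    rw [Real.norm_eq_abs, _root_.abs_of_nonneg (by positivity)]
    exact inv_anti₀ (by positivity) (pow_le_pow_left₀ hcpos.le (hlb lam hl) 2)
  set I : ℝ := ∫ lam, (‖(lam : ℂ) - z‖ ^ 2)⁻¹ ∂μ with hI
  have hInonneg : 0 ≤ I := integral_nonneg fun lam => by positivity
  set ξ : ℂ := ∫ lam, ((lam : ℂ) - z)⁻¹ ∂μ with hξ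
  -- imaginary part
  have him : ξ.im = z.im * I := by
    rw [hξ, ← RCLike.im_to_complex, ← integral_im hint1, hI, ← integral_const_mul]
    refine integral_congr_ae (Filter.EventuallyEq.of_eq ?_)
    funext lam
    rw [RCLike.im_to_complex, Complex.inv_im, Complex.normSq_eq_norm_sq]
    simp only [Complex.sub_im, Complex.ofReal_im]
    ring
  -- real part
  have hre : ξ.re = ∫ lam, (lam - z.re) * (‖(lam : ℂ) - z‖ ^ 2)⁻¹ ∂μ := by
    rw [hξ, ← RCLike.re_to_complex, ← integral_re hint1]
    refine integral_congr_ae (Filter.EventuallyEq.of_eq ?_)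
    funext lam
    rw [RCLike.re_to_complex, Complex.inv_re, Complex.normSq_eq_norm_sq]
    simp only [Complex.sub_re, Complex.ofReal_re]
    ring
  by_cases h : 0 ≤ z.re
  · -- δ_z ≤ |z.im|
    have hδ : deltaZ z ≤ |z.im| := by
      have hmem : ((z.re : ℝ) : ℂ) ∈ RPlus := ⟨z.re, h, rfl⟩
      calc deltaZ z ≤ dist z ((z.re : ℝ) : ℂ) := Metric.infDist_le_dist_of_mem hmem
        _ = |z.im| := by
          rw [Complex.dist_eq]
          have : z - (z.re : ℂ) = z.im * Complex.I := by
            apply Complex.ext <;> simp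
          rw [this]
          simp only [Complex.norm_mul, Complex.norm_I, mul_one]
          simp [Real.sqrt_sq_eq_abs]
    calc deltaZ z * I ≤ |z.im| * I := by
          exact mul_le_mul_of_nonneg_right hδ hInonneg
      _ = |z.im * I| := by rw [abs_mul, _root_.abs_of_nonneg hInonneg]
      _ = |ξ.im| := by rw [him]
      _ ≤ ‖ξ‖ := Complex.abs_im_le_norm ξ
  · have h' := not_le.mp h
    have hδ : deltaZ z ≤ ‖z‖ := by
      have hmem : ((0 : ℝ) : ℂ) ∈ RPlus := ⟨0, Set.self_mem_Ici, rfl⟩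
      calc deltaZ z ≤ dist z ((0 : ℝ) : ℂ) := Metric.infDist_le_dist_of_mem hmem
        _ = ‖z‖ := by simp [Complex.dist_eq]
    have hrege : -z.re * I ≤ ξ.re := by
      rw [hre, ← integral_const_mul]
      refine integral_mono_ae (hint2.const_mul _) ?_ ?_
      · exact ((hint1.re).congr (Filter.EventuallyEq.of_eq (funext fun lam => by
          rw [RCLike.re_to_complex, Complex.inv_re, Complex.normSq_eq_norm_sq]
          simp only [Complex.sub_re, Complex.ofReal_re]
          ring)))
      · filter_upwards [hae] with lam hl
        have : (0:ℝ) ≤ (‖(lam : ℂ) - z‖ ^ 2)⁻¹ := by positivity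
        nlinarith
    have hrenn : 0 ≤ ξ.re := le_trans (by nlinarith) hrege
    have hkey : (‖z‖ * I) ^ 2 ≤ (‖ξ‖) ^ 2 := by
      rw [Complex.sq_norm, Complex.normSq_apply, mul_pow, Complex.sq_norm,
        Complex.normSq_apply]
      have h1 : 0 ≤ -z.re * I := mul_nonneg (by linarith) hInonneg
      have hsq := mul_self_le_mul_self h1 hrege
      have him2 : ξ.im * ξ.im = z.im * I * (z.im * I) := by rw [him]
      nlinarith [hsq, him2]
    have : ‖z‖ * I ≤ ‖ξ‖ := by
      nlinarith [norm_nonneg ξ, mul_nonneg (norm_nonneg z) hInonneg]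
    calc deltaZ z * I ≤ ‖z‖ * I := mul_le_mul_of_nonneg_right hδ hInonneg
      _ ≤ ‖ξ‖ := this
end
end

section
/- Let μ be a probability measure on [0,∞), η > 0 with μ([0,η]) ≥ 1/2, and z ∈ ℂ∖[0,∞). Then the Stieltjes transform ξ(z) = ∫_{[0,∞)} (λ−z)^{−1} dμ(λ) satisfies |ξ(z)|² ≥ δ_z²/(16(η²+|z|²)²), where δ_z = dist(z, [0,∞)). -/
open MeasureTheory ProbabilityTheory Matrix Complex Filter
open scoped ComplexOrder

noncomputable section

/-- If `μ` is a probability measure carried by `[0,∞)`, `η > 0` with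
`μ([0,η]) ≥ 1/2`, and `z ∈ ℂ∖[0,∞)`, then the Stieltjes transform
`ξ(z) = ∫ (λ−z)⁻¹ dμ(λ)` satisfies `|ξ(z)|² ≥ δ_z²/(16(η²+|z|²)²)`. -/
theorem statement5 (μ : Measure ℝ) [IsProbabilityMeasure μ]
    (hsupp : μ (Set.Iio 0) = 0) (η : ℝ) (hη : 0 < η)
    (hmass : (1/2 : ENNReal) ≤ μ (Set.Icc 0 η)) (z : ℂ) (hz : z ∉ RPlus) :
    deltaZ z ^ 2 / (16 * (η ^ 2 + ‖z‖ ^ 2) ^ 2)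
      ≤ ‖∫ lam, ((lam : ℂ) - z)⁻¹ ∂μ‖ ^ 2 := by
  have hclosed : IsClosed RPlus :=
    (Complex.isometry_ofReal.isClosedEmbedding).isClosedMap _ isClosed_Ici
  have hne : RPlus.Nonempty := ⟨0, ⟨0, Set.self_mem_Ici, by simp⟩⟩
  have hδpos : 0 < deltaZ z := (hclosed.notMem_iff_infDist_pos hne).1 hz
  set δ := deltaZ z with hδ
  clear_value δ
  have hδ' : δ = Metric.infDist z RPlus := hδ
  have hdist : ∀ lam : ℝ, 0 ≤ lam → δ ≤ ‖(lam : ℂ) - z‖ := by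
    intro lam hlam
    have hmem : (lam : ℂ) ∈ RPlus := ⟨lam, hlam, rfl⟩
    have h1 := Metric.infDist_le_dist_of_mem (x := z) hmem
    rwa [Complex.dist_eq, norm_sub_rev, ← hδ'] at h1
  have h0 : ∀ᵐ lam ∂μ, 0 ≤ lam := by
    rw [ae_iff]; simp only [not_le]; exact hsupp
  have hnsq : ∀ lam : ℝ, 0 ≤ lam → δ^2 ≤ Complex.normSq ((lam : ℂ) - z) := by
    intro lam hlam
    rw [← Complex.sq_norm]
    exact pow_le_pow_left₀ hδpos.le (hdist lam hlam) 2
  have hsqnn : ∀ lam : ℝ, (0:ℝ) ≤ (Complex.normSq ((lam : ℂ) - z))⁻¹ :=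
    fun lam => inv_nonneg.2 (Complex.normSq_nonneg _)
  -- measurability
  have hmeas : Measurable fun lam : ℝ => ((lam : ℂ) - z)⁻¹ :=
    (Complex.measurable_ofReal.sub measurable_const).inv
  have hmeasSq : Measurable fun lam : ℝ => (Complex.normSq ((lam : ℂ) - z))⁻¹ :=
    (Complex.continuous_normSq.measurable.comp
      (Complex.measurable_ofReal.sub measurable_const)).inv
  -- integrability
  have hInt : Integrable (fun lam : ℝ => ((lam : ℂ) - z)⁻¹) μ := by
    refine Integrable.mono' (integrable_const δ⁻¹) hmeas.aestronglyMeasurable ?_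
    filter_upwards [h0] with lam hlam
    rw [norm_inv]
    exact inv_anti₀ hδpos (hdist lam hlam)
  have hIntSq : Integrable (fun lam : ℝ => (Complex.normSq ((lam : ℂ) - z))⁻¹) μ := by
    refine Integrable.mono' (integrable_const (δ^2)⁻¹) hmeasSq.aestronglyMeasurable ?_
    filter_upwards [h0] with lam hlam
    rw [Real.norm_eq_abs, _root_.abs_of_nonneg (hsqnn lam)]
    exact inv_anti₀ (by positivity) (hnsq lam hlam)
  set ξ := ∫ lam, ((lam : ℂ) - z)⁻¹ ∂μ with hξ
  set A := ‖z‖ with hA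
  set Ifull := ∫ lam, (Complex.normSq ((lam : ℂ) - z))⁻¹ ∂μ with hIfull
  set J := ∫ lam in Set.Icc 0 η, (Complex.normSq ((lam : ℂ) - z))⁻¹ ∂μ with hJ
  clear_value ξ A Ifull J
  have hJle : J ≤ Ifull := by
    rw [hJ, hIfull]
    refine setIntegral_le_integral hIntSq ?_
    filter_upwards with lam
    exact hsqnn lam
  have hJnonneg : 0 ≤ J := by
    rw [hJ]
    exact setIntegral_nonneg measurableSet_Icc fun lam _ => hsqnn lam
  have hA2 : A^2 = z.re^2 + z.im^2 := by
    rw [hA, Complex.sq_norm, Complex.normSq_apply]; ring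
  -- lower bound on J
  have hJlb : (4 * (η^2 + A^2))⁻¹ ≤ J := by
    have hμIcc : μ (Set.Icc 0 η) ≠ ⊤ := measure_ne_top μ _
    have hbound : ∀ lam ∈ Set.Icc 0 η,
        (2 * (η^2 + A^2))⁻¹ ≤ (Complex.normSq ((lam : ℂ) - z))⁻¹ := by
      intro lam hlam
      apply inv_anti₀
      · exact lt_of_lt_of_le (by positivity) (hnsq lam hlam.1)
      · have h1 : Complex.normSq ((lam:ℂ) - z) = (lam - z.re)^2 + z.im^2 := by
          simp [Complex.normSq_apply, sq]
        have hl2 : lam^2 ≤ η^2 := pow_le_pow_left₀ hlam.1 hlam.2 2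
        rw [h1, hA2]
        nlinarith [sq_nonneg (lam + z.re)]
    have hkey := setIntegral_ge_of_const_le measurableSet_Icc hμIcc hbound
      hIntSq.integrableOn
    have hmreal : (1/2 : ℝ) ≤ (μ (Set.Icc 0 η)).toReal := by
      have h1 : ((1/2 : ENNReal)).toReal ≤ (μ (Set.Icc 0 η)).toReal :=
        ENNReal.toReal_mono hμIcc hmass
      simpa using h1
    have hx : (0:ℝ) < η^2 + A^2 := by positivity
    calc (4 * (η^2 + A^2))⁻¹ = (2 * (η^2 + A^2))⁻¹ * (1/2) := by
          field_simp; ring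
      _ ≤ (2 * (η^2 + A^2))⁻¹ * (μ (Set.Icc 0 η)).toReal :=
          mul_le_mul_of_nonneg_left hmreal (by positivity)
      _ ≤ J := by rw [hJ]; simpa [measureReal_def, smul_eq_mul, mul_comm] using hkey
  -- real and imaginary parts of ξ
  have him : ξ.im = z.im * Ifull := by
    have h := integral_im (𝕜 := ℂ) hInt
    simp only [RCLike.im_to_complex] at h
    rw [hξ, ← h, hIfull, ← integral_const_mul]
    congr 1; funext lam
    rw [Complex.inv_im, show ((lam:ℂ) - z).im = -z.im by simp, div_eq_mul_inv]
    ring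
  have hre : ξ.re = ∫ lam, (lam - z.re) * (Complex.normSq ((lam : ℂ) - z))⁻¹ ∂μ := by
    have h := integral_re (𝕜 := ℂ) hInt
    simp only [RCLike.re_to_complex] at h
    rw [hξ, ← h]
    congr 1; funext lam
    rw [Complex.inv_re, show ((lam:ℂ) - z).re = lam - z.re by simp, div_eq_mul_inv]
  have hIntRe : Integrable (fun lam : ℝ => (lam - z.re) * (Complex.normSq ((lam:ℂ)-z))⁻¹) μ := by
    refine hInt.re.congr (Filter.Eventually.of_forall fun lam => ?_)
    simp only [RCLike.re_to_complex]
    rw [Complex.inv_re, show ((lam:ℂ) - z).re = lam - z.re by simp, div_eq_mul_inv]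
  have habs2 : ‖ξ‖ ^ 2 = ξ.re^2 + ξ.im^2 := by
    rw [Complex.sq_norm, Complex.normSq_apply]; ring
  have him2 : z.im^2 * J^2 ≤ ξ.im^2 := by
    rw [him]
    have h1 : z.im^2 * J^2 ≤ z.im^2 * Ifull^2 :=
      mul_le_mul_of_nonneg_left (pow_le_pow_left₀ hJnonneg hJle 2) (sq_nonneg _)
    calc z.im^2 * J^2 ≤ z.im^2 * Ifull^2 := h1
      _ = (z.im * Ifull)^2 := by ring
  -- key bound |ξ|² ≥ δ² J²
  have hkey : δ^2 * J^2 ≤ ‖ξ‖ ^ 2 := by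
    rcases le_or_gt 0 z.re with hrez | hrez
    · -- Re z ≥ 0 : δ ≤ |Im z|
      have hδim : δ ≤ |z.im| := by
        have hmem : ((z.re : ℝ) : ℂ) ∈ RPlus := ⟨z.re, hrez, rfl⟩
        have h1 := Metric.infDist_le_dist_of_mem (x := z) hmem
        have h2 : z - (z.re : ℂ) = (z.im : ℂ) * Complex.I := by
          apply Complex.ext <;> simp
        rw [Complex.dist_eq, h2, ← hδ'] at h1
        simpa using h1
      have hδ2 : δ^2 ≤ z.im^2 := by
        rw [← _root_.sq_abs z.im]
        exact pow_le_pow_left₀ hδpos.le hδim 2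
      have h3 : δ^2 * J^2 ≤ z.im^2 * J^2 :=
        mul_le_mul_of_nonneg_right hδ2 (sq_nonneg J)
      rw [habs2]
      linarith [sq_nonneg ξ.re, h3, him2]
    · -- Re z < 0
      have hδz : δ ≤ A := by
        have hmem : (0 : ℂ) ∈ RPlus := ⟨0, Set.self_mem_Ici, by simp⟩
        have h1 := Metric.infDist_le_dist_of_mem (x := z) hmem
        rw [← hδ'] at h1
        simpa [Complex.dist_eq, hA] using h1
      have hreξ : -z.re * Ifull ≤ ξ.re := by
        rw [hre, hIfull, ← integral_const_mul]
        apply integral_mono_ae (hIntSq.const_mul _) hIntRe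
        filter_upwards [h0] with lam hlam
        exact mul_le_mul_of_nonneg_right (by linarith) (hsqnn lam)
      have hreJ : -z.re * J ≤ ξ.re := by
        refine le_trans ?_ hreξ
        exact mul_le_mul_of_nonneg_left hJle (by linarith)
      have h1 : 0 ≤ -z.re * J := mul_nonneg (by linarith) hJnonneg
      have hre2 : z.re^2 * J^2 ≤ ξ.re^2 := by
        calc z.re^2 * J^2 = (-z.re * J) * (-z.re * J) := by ring
          _ ≤ ξ.re * ξ.re := mul_self_le_mul_self h1 hreJ
          _ = ξ.re^2 := by ring
      have hδ2 : δ^2 ≤ A^2 := pow_le_pow_left₀ hδpos.le hδz 2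
      have hδJ : δ^2 * J^2 ≤ A^2 * J^2 := mul_le_mul_of_nonneg_right hδ2 (sq_nonneg J)
      have hsplit : A^2 * J^2 = z.re^2 * J^2 + z.im^2 * J^2 := by rw [hA2]; ring
      rw [habs2]
      linarith
  -- combine
  have hJ1 : ((4*(η^2+A^2))⁻¹)^2 ≤ J^2 := pow_le_pow_left₀ (by positivity) hJlb 2
  have hfinal : δ^2 / (16 * (η^2 + A^2)^2) ≤ δ^2 * J^2 := by
    have hx : (0:ℝ) < η^2 + A^2 := by positivity
    calc δ^2 / (16 * (η^2 + A^2)^2) = δ^2 * ((4*(η^2+A^2))⁻¹)^2 := by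
          field_simp; ring
      _ ≤ δ^2 * J^2 := mul_le_mul_of_nonneg_left hJ1 (sq_nonneg δ)
  exact hfinal.trans hkey
end
end
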